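/- Consecutive words in the full Gray code of words of length n encode standard permutations of {±1,...,±n} that differ by an adjacent transposition; hence the full Gray code is an adjacent-transposition Gray code for all standard permutations. -/

import Mathlib

/-- The full Gray code of words: for `n = 0` the single empty word; words of
the length-`n` code at even (0-indexed, i.e. odd 1-indexed) positions are
extended by last letters `1, 2, …, 2(n+1)-1` in increasing order, those at odd
(0-indexed) positions by the same last letters in decreasing order. -/
def grayCode : ℕ → List (List ℕ)
  | 0 => [[]]
  | n+1 =>
      ((grayCode n).zipIdx.map (fun p =>
        if p.2 % 2 = 0 then
          (List.range (2*n + 1)).map (fun j => p.1 ++ [j + 1])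
        else
          ((List.range (2*n + 1)).map (fun j => p.1 ++ [j + 1])).reverse)).flatten

/-- The 1-indexed `i`-th letter of a word. -/
def wd (a : List ℕ) (i : ℕ) : ℕ := a.getD (i - 1) 0

/-- A word `a₁…aₙ` is arc-disconnected if there is a `k ≥ 2` with
`a_k = 2k-1` and `a_j ≥ 2k-1` for all `j > k`. -/
def ArcDiscL (a : List ℕ) : Prop :=
  ∃ k, 2 ≤ k ∧ k ≤ a.length ∧ wd a k = 2*k - 1 ∧
    ∀ j, k < j → j ≤ a.length → 2*k - 1 ≤ wd a j

/-- A sequence `π` lists each element of `{±1, …, ±n}` exactly once among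
positions `0, …, 2n-1`. -/
def IsSgnPerm (n : ℕ) (π : ℕ → ℤ) : Prop :=
  (Finset.range (2*n)).image π = (Finset.Icc (-(n:ℤ)) (n:ℤ)).erase 0

/-- A standard permutation of `{±1, …, ±n}`: each `i` appears before `-i`, and
the negative entries appear in the order `-1, -2, …, -n`. -/
def IsStdPerm (n : ℕ) (π : ℕ → ℤ) : Prop :=
  IsSgnPerm n π ∧
  (∀ k l, k < 2*n → l < 2*n → 0 < π k → π l = -π k → k < l) ∧
  (∀ k l, k < 2*n → l < 2*n → π k < 0 → π l < 0 → (k < l ↔ π l < π k))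

/-- Sign-connectedness: every proper nonempty initial segment contains exactly
one element of some pair `{j, -j}`. -/
def SignConnected (n : ℕ) (π : ℕ → ℤ) : Prop :=
  ∀ m, 1 ≤ m → m < 2*n → ∃ j : ℤ, 1 ≤ j ∧ j ≤ n ∧
    Xor' (∃ i < m, π i = j) (∃ i < m, π i = -j)

/-- The word `a` (a list, 1-indexed via `getD (k-1)`) encodes the standard
permutation `π` via arc diagrams: `a_k` is the (1-indexed) position of the
entry `k` among the entries of absolute value at most `k`. -/
def EncodesL (n : ℕ) (a : List ℕ) (π : ℕ → ℤ) : Prop :=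
  ∀ k, 1 ≤ k → k ≤ n → ∀ p < 2*n, π p = (k : ℤ) →
    wd a k = ((Finset.range (p+1)).filter (fun j => |π j| ≤ (k : ℤ))).card

/-- Two enumerations differ by an adjacent transposition: they agree except
for swapping two consecutive entries. -/
def AdjSwap (n : ℕ) (π ρ : ℕ → ℤ) : Prop :=
  ∃ p, p + 1 < 2*n ∧ ρ p = π (p+1) ∧ ρ (p+1) = π p ∧ π p ≠ π (p+1) ∧
    ∀ q < 2*n, q ≠ p → q ≠ p+1 → ρ q = π q

/-!
A step of the Gray code changes a single letter `a_k` by one while every later letter is extreme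
(`1` or `2j - 1`). Raising `a_k` moves the entry `k` one place to the right: the extremality of
the later letters forces the entry right after `k` to have absolute value at most `k`, it is not
`-k` because `a_k < 2k - 1`, and swapping the two changes no letter but `a_k`. A standard
permutation is determined by its word (the entries `k` and `-k` are inserted into the order of
the entries of smaller absolute value at prescribed ranks), so the swapped permutation is the one
encoded by the next word.
-/

open Finset Equiv

theorem List.getElem?_flatten_of_length_eq {α : Type*} {L : List (List α)} {c : ℕ} (hc : 0 < c)
    (h : ∀ x ∈ L, x.length = c) (m : ℕ) :
    L.flatten[m]? = L[m / c]?.bind (·[m % c]?) := by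
  induction L generalizing m with
  | nil => simp
  | cons x L ih =>
    rw [List.flatten_cons, List.getElem?_append, h x (by simp)]
    rcases lt_or_ge m c with hm | hm
    · simp [hm, Nat.div_eq_of_lt hm, Nat.mod_eq_of_lt hm]
    · rw [if_neg (by omega), Nat.div_eq_sub_div hc hm, Nat.mod_eq_sub_mod hm,
        List.getElem?_cons_succ]
      exact ih (fun y hy => h y (by simp [hy])) (m - c)

/-- The last letter of the `m`-th word of `grayCode (n+1)`, where `m = (2n+1) t + s`. -/
def grayLetter (n t s : ℕ) : ℕ := if t % 2 = 0 then s + 1 else 2 * n + 1 - s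

theorem grayCode_succ_getElem? (n m : ℕ) :
    (grayCode (n + 1))[m]? = (grayCode n)[m / (2 * n + 1)]?.map
      (· ++ [grayLetter n (m / (2 * n + 1)) (m % (2 * n + 1))]) := by
  have hs : m % (2 * n + 1) < 2 * n + 1 := Nat.mod_lt _ (by omega)
  rw [grayCode, List.getElem?_flatten_of_length_eq (c := 2 * n + 1) (by omega)]
  · rw [List.getElem?_map, List.getElem?_zipIdx, zero_add]
    cases (grayCode n)[m / (2 * n + 1)]? with
    | none => rfl
    | some w =>
      by_cases ht : m / (2 * n + 1) % 2 = 0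
      · simp [ht, grayLetter, hs]
      · simp only [ht, grayLetter, Option.map_some, Option.bind_some, if_false]
        rw [List.getElem?_reverse (by simpa using hs), List.length_map, List.length_range,
          List.getElem?_map, List.getElem?_range (by omega)]
        simp only [Option.map_some]
        congr 3
        omega
  · simp only [List.mem_map]
    rintro _ ⟨p, -, rfl⟩
    split_ifs <;> simp

theorem length_of_mem_grayCode {n : ℕ} {a : List ℕ} (ha : a ∈ grayCode n) : a.length = n := by
  induction n generalizing a with
  | zero => simp_all [grayCode]
  | succ n ih =>
    obtain ⟨m, hm⟩ := List.getElem?_of_mem ha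
    rw [grayCode_succ_getElem?] at hm
    obtain ⟨w, hw, rfl⟩ := Option.map_eq_some_iff.1 hm
    simp [ih (List.mem_of_getElem? hw)]

theorem wd_append_of_le {w : List ℕ} (x : ℕ) {j : ℕ} (h1 : 1 ≤ j) (h2 : j ≤ w.length) :
    wd (w ++ [x]) j = wd w j := by
  simp only [wd, List.getD_eq_getElem?_getD, List.getElem?_append,
    if_pos (by omega : j - 1 < w.length)]

theorem wd_append_length_succ (w : List ℕ) (x : ℕ) : wd (w ++ [x]) (w.length + 1) = x := by
  simp [wd]

structure IncrStep (n k : ℕ) (a b : List ℕ) : Prop where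
  one_le : 1 ≤ k
  le_len : k ≤ n
  wd_succ : wd b k = wd a k + 1
  wd_le : wd b k ≤ 2 * k - 1
  wd_eq : ∀ j, 1 ≤ j → j ≤ n → j ≠ k → wd a j = wd b j
  extreme : ∀ j, k < j → j ≤ n → wd a j = 1 ∨ wd a j = 2 * j - 1

theorem IncrStep.append {n k : ℕ} {w w' : List ℕ} (h : IncrStep n k w w')
    (hw : w.length = n) (hw' : w'.length = n) {x : ℕ} (hx : x = 1 ∨ x = 2 * n + 1) :
    IncrStep (n + 1) k (w ++ [x]) (w' ++ [x]) := by
  have hk := h.one_le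
  have hkn := h.le_len
  have last : ∀ v : List ℕ, v.length = n → wd (v ++ [x]) (n + 1) = x := fun v hv => by
    rw [← hv, wd_append_length_succ]
  refine ⟨hk, by omega, ?_, ?_, fun j hj1 hj2 hjk => ?_, fun j hkj hjn => ?_⟩
  · rw [wd_append_of_le _ hk (by omega), wd_append_of_le _ hk (by omega), h.wd_succ]
  · rw [wd_append_of_le _ hk (by omega)]
    exact h.wd_le
  · rcases Nat.lt_or_ge j (n + 1) with hj | hj
    · rw [wd_append_of_le _ hj1 (by omega), wd_append_of_le _ hj1 (by omega)]
      exact h.wd_eq j hj1 (by omega) hjk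
    · rw [show j = n + 1 by omega, last w hw, last w' hw']
  · rcases Nat.lt_or_ge j (n + 1) with hj | hj
    · rw [wd_append_of_le _ (by omega) (by omega)]
      exact h.extreme j hkj (by omega)
    · rw [show j = n + 1 by omega, last w hw]
      omega

theorem incrStep_append_last {n : ℕ} {w : List ℕ} (hw : w.length = n) {x : ℕ}
    (hx : x + 1 ≤ 2 * n + 1) :
    IncrStep (n + 1) (n + 1) (w ++ [x]) (w ++ [x + 1]) := by
  have last : ∀ y, wd (w ++ [y]) (n + 1) = y := fun y => by rw [← hw, wd_append_length_succ]
  refine ⟨by omega, le_rfl, ?_, ?_, fun j hj1 hj2 hjk => ?_, fun j hj hjn => by omega⟩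
  · rw [last, last]
  · rw [last]
    omega
  · rw [wd_append_of_le _ hj1 (by omega), wd_append_of_le _ hj1 (by omega)]

theorem exists_incrStep_of_grayCode {n m : ℕ} {a b : List ℕ}
    (ha : (grayCode n)[m]? = some a) (hb : (grayCode n)[m + 1]? = some b) :
    ∃ k, IncrStep n k a b ∨ IncrStep n k b a := by
  induction n generalizing m a b with
  | zero => simp [grayCode] at hb
  | succ n ih =>
    rw [grayCode_succ_getElem?] at ha hb
    obtain ⟨w, hw, rfl⟩ := Option.map_eq_some_iff.1 ha
    obtain ⟨w', hw', rfl⟩ := Option.map_eq_some_iff.1 hb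
    have hl := length_of_mem_grayCode (List.mem_of_getElem? hw)
    have hl' := length_of_mem_grayCode (List.mem_of_getElem? hw')
    have hdm := Nat.div_add_mod m (2 * n + 1)
    have hs := Nat.mod_lt m (show 0 < 2 * n + 1 by omega)
    set t := m / (2 * n + 1)
    set s := m % (2 * n + 1)
    rcases Nat.lt_or_ge (s + 1) (2 * n + 1) with hlt | hge
    · have hm : m + 1 = (2 * n + 1) * t + (s + 1) := by omega
      have ht' : (m + 1) / (2 * n + 1) = t := by
        rw [hm, Nat.mul_add_div (by omega), Nat.div_eq_of_lt hlt, add_zero]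
      have hs' : (m + 1) % (2 * n + 1) = s + 1 := by
        rw [hm, Nat.mul_add_mod, Nat.mod_eq_of_lt hlt]
      rw [ht', hw, Option.some_inj] at hw'
      subst hw'
      rw [ht', hs']
      unfold grayLetter
      refine ⟨n + 1, ?_⟩
      split_ifs
      · exact Or.inl (incrStep_append_last hl (by omega))
      · right
        rw [show 2 * n + 1 - s = 2 * n + 1 - (s + 1) + 1 by omega]
        exact incrStep_append_last hl (by omega)
    · have hm : m + 1 = (2 * n + 1) * (t + 1) := by rw [Nat.mul_succ]; omega
      have ht' : (m + 1) / (2 * n + 1) = t + 1 := by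
        rw [hm, Nat.mul_div_cancel_left _ (by omega)]
      have hs' : (m + 1) % (2 * n + 1) = 0 := by
        rw [hm, Nat.mul_mod_right]
      rw [ht'] at hw'
      obtain ⟨k, hk⟩ := ih hw hw'
      have hlast : grayLetter n t s = grayLetter n (t + 1) 0 := by
        unfold grayLetter
        split_ifs <;> omega
      have hx : grayLetter n t s = 1 ∨ grayLetter n t s = 2 * n + 1 := by
        unfold grayLetter
        split_ifs <;> omega
      rw [ht', hs', ← hlast]
      exact ⟨k, hk.imp (·.append hl hl' hx) (·.append hl' hl hx)⟩

noncomputable def signedRange (n : ℕ) : Finset ℤ := (Finset.Icc (-(n : ℤ)) (n : ℤ)).erase 0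

theorem mem_signedRange {n : ℕ} {v : ℤ} : v ∈ signedRange n ↔ v ≠ 0 ∧ |v| ≤ n := by
  rw [signedRange, mem_erase, mem_Icc, ← abs_le]

theorem card_signedRange (n : ℕ) : #(signedRange n) = 2 * n := by
  rw [signedRange, card_erase_of_mem (by simp), Int.card_Icc]
  omega

theorem natCast_mem_signedRange {n k : ℕ} (hk : 1 ≤ k) (hkn : k ≤ n) :
    (k : ℤ) ∈ signedRange n :=
  mem_signedRange.2 ⟨by omega, by rw [abs_of_nonneg (by omega)]; omega⟩

theorem neg_natCast_mem_signedRange {n k : ℕ} (hk : 1 ≤ k) (hkn : k ≤ n) :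
    -(k : ℤ) ∈ signedRange n :=
  mem_signedRange.2 ⟨by omega, by rw [abs_neg, abs_of_nonneg (by omega)]; omega⟩

theorem natCast_notMem_signedRange {k m : ℕ} (h : k < m) : (m : ℤ) ∉ signedRange k := by
  rw [mem_signedRange, abs_of_nonneg (by omega)]
  omega

theorem neg_natCast_notMem_signedRange {k m : ℕ} (h : k < m) : -(m : ℤ) ∉ signedRange k := by
  rw [mem_signedRange, abs_neg, abs_of_nonneg (by omega)]
  omega

theorem signedRange_mono {k n : ℕ} (hk : k ≤ n) : signedRange k ⊆ signedRange n :=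
  fun v hv => by
  rw [mem_signedRange] at hv ⊢
  exact ⟨hv.1, hv.2.trans (by exact_mod_cast hk)⟩

theorem filter_abs_le_signedRange {n k : ℕ} (hk : k ≤ n) :
    (signedRange n).filter (fun v => |v| ≤ (k : ℤ)) = signedRange k := by
  ext v
  simp only [mem_filter, mem_signedRange]
  constructor
  · exact fun ⟨⟨h0, _⟩, hv⟩ => ⟨h0, hv⟩
  · exact fun ⟨h0, hv⟩ => ⟨⟨h0, hv.trans (by exact_mod_cast hk)⟩, hv⟩

theorem signedRange_succ (k : ℕ) :
    signedRange (k + 1) =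
      insert (-((k + 1 : ℕ) : ℤ)) (insert ((k + 1 : ℕ) : ℤ) (signedRange k)) := by
  ext v
  simp only [mem_insert, mem_signedRange]
  push_cast
  constructor
  · rintro ⟨h0, hv⟩
    rcases abs_le.1 hv with ⟨h1, h2⟩
    by_cases hk : |v| ≤ k
    · exact Or.inr (Or.inr ⟨h0, hk⟩)
    · rcases abs_cases v with ⟨h, _⟩ | ⟨h, _⟩ <;> omega
  · rintro (rfl | rfl | ⟨h0, hv⟩)
    · exact ⟨by omega, by rw [abs_neg, abs_of_nonneg (by omega)]⟩
    · exact ⟨by omega, by rw [abs_of_nonneg (by omega)]⟩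
    · exact ⟨h0, by omega⟩

/-- Junk unless `IsSgnPerm n π` and `v ∈ signedRange n`. -/
noncomputable def pos (n : ℕ) (π : ℕ → ℤ) (v : ℤ) : ℕ :=
  Function.invFunOn π (Set.Iio (2 * n)) v

namespace IsSgnPerm

variable {n : ℕ} {π : ℕ → ℤ}

theorem apply_mem (hπ : IsSgnPerm n π) {q : ℕ} (hq : q < 2 * n) : π q ∈ signedRange n := by
  rw [signedRange, ← hπ]
  exact mem_image_of_mem _ (mem_range.2 hq)

theorem injOn (hπ : IsSgnPerm n π) : Set.InjOn π (Set.Iio (2 * n)) := by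
  have hcard : #((range (2 * n)).image π) = #(range (2 * n)) := by
    rw [hπ, card_range]
    exact card_signedRange n
  simpa using Finset.injOn_of_card_image_eq hcard

theorem exists_apply_eq (hπ : IsSgnPerm n π) {v : ℤ} (hv : v ∈ signedRange n) :
    ∃ q ∈ Set.Iio (2 * n), π q = v := by
  rw [signedRange, ← hπ] at hv
  simpa using hv

theorem pos_lt (hπ : IsSgnPerm n π) {v : ℤ} (hv : v ∈ signedRange n) : pos n π v < 2 * n :=
  Function.invFunOn_mem (hπ.exists_apply_eq hv)

theorem apply_pos (hπ : IsSgnPerm n π) {v : ℤ} (hv : v ∈ signedRange n) :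
    π (pos n π v) = v :=
  Function.invFunOn_eq (hπ.exists_apply_eq hv)

theorem pos_apply (hπ : IsSgnPerm n π) {q : ℕ} (hq : q < 2 * n) : pos n π (π q) = q :=
  hπ.injOn.leftInvOn_invFunOn hq

theorem pos_injOn (hπ : IsSgnPerm n π) : Set.InjOn (pos n π) (signedRange n) :=
  fun u hu v hv h => by rw [← hπ.apply_pos hu, ← hπ.apply_pos hv, h]

theorem eq_of_pos_eq (hπ : IsSgnPerm n π) {q : ℕ} {v : ℤ}
    (hv : v ∈ signedRange n) (h : pos n π v = q) : π q = v := by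
  rw [← h, hπ.apply_pos hv]

theorem card_filter_range (hπ : IsSgnPerm n π) (P : ℕ) (hP : P < 2 * n) (p : ℤ → Prop)
    [DecidablePred p] :
    #((range (P + 1)).filter (p ∘ π)) =
      #((signedRange n).filter (fun v => p v ∧ pos n π v ≤ P)) := by
  rw [← card_image_of_injOn (hπ.injOn.mono ?_)]
  · congr 1
    ext v
    simp only [mem_image, mem_filter, mem_range, Function.comp]
    constructor
    · rintro ⟨q, ⟨hq, hpq⟩, rfl⟩
      have hq2 : q < 2 * n := hq.trans_le (by omega)
      exact ⟨hπ.apply_mem hq2, hpq, by rw [hπ.pos_apply hq2]; omega⟩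
    · rintro ⟨hv, hpv, hle⟩
      exact ⟨pos n π v, ⟨by omega, by rwa [hπ.apply_pos hv]⟩, hπ.apply_pos hv⟩
  · exact fun q hq => Set.mem_Iio.2 ((mem_range.1 (mem_filter.1 hq).1).trans_le (by omega))

theorem card_filter_pos_lt (hπ : IsSgnPerm n π) {v : ℤ} (hv : v ∈ signedRange n) :
    #((signedRange n).filter (fun u => pos n π u < pos n π v)) = pos n π v := by
  have hlt : ∀ q < pos n π v, q < 2 * n := fun q hq => by linarith [hπ.pos_lt hv]
  have himage : (signedRange n).filter (fun u => pos n π u < pos n π v)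
      = (range (pos n π v)).image π := by
    ext u
    simp only [mem_filter, mem_image, mem_range]
    constructor
    · exact fun ⟨hu, hpu⟩ => ⟨pos n π u, hpu, hπ.apply_pos hu⟩
    · rintro ⟨q, hq, rfl⟩
      exact ⟨hπ.apply_mem (hlt q hq), by rwa [hπ.pos_apply (hlt q hq)]⟩
  rw [himage, card_image_of_injOn (hπ.injOn.mono fun q hq => hlt q (by simpa using hq)),
    card_range]

end IsSgnPerm

noncomputable def codeLetter (n : ℕ) (π : ℕ → ℤ) (k : ℤ) : ℕ :=
  #((signedRange n).filter (fun v => |v| ≤ k ∧ pos n π v ≤ pos n π k))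

theorem codeLetter_eq_card_filter {n : ℕ} (π : ℕ → ℤ) {k : ℕ} (hkn : k ≤ n) :
    codeLetter n π k = #((signedRange k).filter (fun v => pos n π v ≤ pos n π k)) := by
  rw [codeLetter, ← filter_filter, filter_abs_le_signedRange hkn]

theorem pos_lt_of_codeLetter_eq_one {n : ℕ} {π : ℕ → ℤ} {k : ℕ} (hk : 1 ≤ k)
    (hkn : k ≤ n) (h : codeLetter n π k = 1) {v : ℤ} (hv : v ∈ signedRange k)
    (hvk : v ≠ k) :
    pos n π k < pos n π v := by
  by_contra hle
  rw [codeLetter_eq_card_filter π hkn, card_eq_one] at h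
  obtain ⟨w, hw⟩ := h
  have hkw : (k : ℤ) ∈ (signedRange k).filter (fun v => pos n π v ≤ pos n π k) :=
    mem_filter.2 ⟨natCast_mem_signedRange hk le_rfl, le_rfl⟩
  have hvw : v ∈ (signedRange k).filter (fun v => pos n π v ≤ pos n π k) :=
    mem_filter.2 ⟨hv, not_lt.1 hle⟩
  rw [hw, mem_singleton] at hkw hvw
  exact hvk (hvw.trans hkw.symm)

theorem IsSgnPerm.encodesL_iff {n : ℕ} {π : ℕ → ℤ} {a : List ℕ} (hπ : IsSgnPerm n π) :
    EncodesL n a π ↔ ∀ k : ℕ, 1 ≤ k → k ≤ n → wd a k = codeLetter n π k := by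
  have key : ∀ k : ℕ, 1 ≤ k → k ≤ n → ∀ p < 2 * n, π p = k →
      #((range (p + 1)).filter (fun j => |π j| ≤ (k : ℤ))) = codeLetter n π k := by
    intro k hk hkn p hp hpk
    rw [codeLetter, ← hpk, hπ.pos_apply hp]
    exact hπ.card_filter_range p hp (fun v => |v| ≤ π p)
  constructor
  · intro h k hk hkn
    have hkV := natCast_mem_signedRange hk hkn
    rw [h k hk hkn _ (hπ.pos_lt hkV) (hπ.apply_pos hkV),
      key k hk hkn _ (hπ.pos_lt hkV) (hπ.apply_pos hkV)]
  · intro h k hk hkn p hp hpk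
    rw [h k hk hkn, key k hk hkn p hp hpk]

namespace IsStdPerm

variable {n : ℕ} {π : ℕ → ℤ}

theorem pos_lt_pos_neg (hπ : IsStdPerm n π) {i : ℤ} (hi : 1 ≤ i) (hin : i ≤ n) :
    pos n π i < pos n π (-i) := by
  have hiV : i ∈ signedRange n :=
    mem_signedRange.2 ⟨by omega, by rw [abs_of_pos (by omega)]; omega⟩
  have hniV : -i ∈ signedRange n :=
    mem_signedRange.2 ⟨by omega, by rw [abs_neg, abs_of_pos (by omega)]; omega⟩
  exact hπ.2.1 _ _ (hπ.1.pos_lt hiV) (hπ.1.pos_lt hniV) (by rw [hπ.1.apply_pos hiV]; omega)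
    (by rw [hπ.1.apply_pos hiV, hπ.1.apply_pos hniV])

theorem pos_neg_lt_pos_neg (hπ : IsStdPerm n π) {i j : ℤ} (hi : 1 ≤ i) (hij : i < j)
    (hjn : j ≤ n) : pos n π (-i) < pos n π (-j) := by
  have hiV : -i ∈ signedRange n :=
    mem_signedRange.2 ⟨by omega, by rw [abs_neg, abs_of_pos (by omega)]; omega⟩
  have hjV : -j ∈ signedRange n :=
    mem_signedRange.2 ⟨by omega, by rw [abs_neg, abs_of_pos (by omega)]; omega⟩
  refine (hπ.2.2 _ _ (hπ.1.pos_lt hiV) (hπ.1.pos_lt hjV) ?_ ?_).2 ?_ <;>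
    simp only [hπ.1.apply_pos hiV, hπ.1.apply_pos hjV] <;> omega

theorem pos_lt_pos_neg_of_abs_le (hπ : IsStdPerm n π) {k v : ℤ} (hk : 1 ≤ k) (hkn : k ≤ n)
    (hv : v ∈ signedRange n) (hvk : |v| ≤ k) (hne : v ≠ -k) : pos n π v < pos n π (-k) := by
  have hv0 := (mem_signedRange.1 hv).1
  rcases abs_cases v with ⟨habs, hv'⟩ | ⟨habs, hv'⟩
  · rw [habs] at hvk
    calc pos n π v < pos n π (-v) := hπ.pos_lt_pos_neg (by omega) (by omega)
      _ ≤ pos n π (-k) := by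
        rcases hvk.lt_or_eq with hlt | rfl
        · exact (hπ.pos_neg_lt_pos_neg (by omega) hlt hkn).le
        · rfl
  · have := hπ.pos_neg_lt_pos_neg (i := -v) (j := k) (by omega) (by omega) hkn
    rwa [neg_neg] at this

end IsStdPerm

def SameOrderOn {α : Type*} (f g : α → ℕ) (S : Finset α) : Prop :=
  ∀ u ∈ S, ∀ v ∈ S, f u < f v ↔ g u < g v

theorem lt_iff_card_filter_lt_lt {α : Type*} {f : α → ℕ} {S : Finset α} {w x : α}
    (hw : w ∈ S) (hne : f w ≠ f x) :
    f w < f x ↔ #(S.filter (f · < f w)) < #(S.filter (f · < f x)) := by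
  constructor
  · intro hlt
    refine card_lt_card ⟨fun u hu => ?_, fun hsub => ?_⟩
    · simp only [mem_filter] at hu ⊢
      exact ⟨hu.1, hu.2.trans hlt⟩
    · simpa using (mem_filter.1 (hsub (mem_filter.2 ⟨hw, hlt⟩))).2
  · intro hcard
    by_contra hge
    have hgt : f x < f w := lt_of_le_of_ne (not_lt.1 hge) hne.symm
    have hsub : S.filter (f · < f x) ⊆ S.filter (f · < f w) := fun u hu => by
      simp only [mem_filter] at hu ⊢
      exact ⟨hu.1, hu.2.trans hgt⟩
    exact absurd (card_le_card hsub) (by omega)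

theorem SameOrderOn.insert {α : Type*} [DecidableEq α] {f g : α → ℕ} {S : Finset α} {x : α}
    (h : SameOrderOn f g S) (hx : x ∉ S) (hf : Set.InjOn f ((insert x S : Finset α) : Set α))
    (hg : Set.InjOn g ((insert x S : Finset α) : Set α))
    (hrank : #(S.filter (f · < f x)) = #(S.filter (g · < g x))) :
    SameOrderOn f g (insert x S) := by
  have hfx : ∀ w ∈ S, f w ≠ f x := fun w hw hwx => hx (hf (by simp [hw]) (by simp) hwx ▸ hw)
  have hgx : ∀ w ∈ S, g w ≠ g x := fun w hw hwx => hx (hg (by simp [hw]) (by simp) hwx ▸ hw)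
  have hfilter : ∀ w ∈ S, S.filter (f · < f w) = S.filter (g · < g w) := fun w hw =>
    filter_congr fun u hu => h u hu w hw
  have hlt : ∀ w ∈ S, f w < f x ↔ g w < g x := fun w hw => by
    rw [lt_iff_card_filter_lt_lt hw (hfx w hw), lt_iff_card_filter_lt_lt hw (hgx w hw),
      hfilter w hw, hrank]
  have hgt : ∀ w ∈ S, f x < f w ↔ g x < g w := fun w hw => by
    have := hlt w hw
    have := hfx w hw
    have := hgx w hw
    omega
  intro u hu v hv
  rcases mem_insert.1 hu with rfl | huS <;> rcases mem_insert.1 hv with rfl | hvS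
  · simp
  · exact hgt v hvS
  · exact hlt u huS
  · exact h u huS v hvS

theorem card_filter_lt_of_forall_lt {α : Type*} {f : α → ℕ} {S : Finset α} {x : α}
    (h : ∀ w ∈ S, f w < f x) : #(S.filter (f · < f x)) = #S := by
  rw [filter_true_of_mem h]

namespace IsStdPerm

variable {n : ℕ} {π ρ : ℕ → ℤ}

theorem codeLetter_succ (hπ : IsStdPerm n π) {k : ℕ} (hkn : k + 1 ≤ n) :
    codeLetter n π (k + 1 : ℕ) =
      #((signedRange k).filter (fun v => pos n π v < pos n π (k + 1 : ℕ))) + 1 := by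
  have hK := natCast_mem_signedRange (n := n) (k := k + 1) (by omega) hkn
  have hlast := hπ.pos_lt_pos_neg (i := ((k + 1 : ℕ) : ℤ)) (by omega) (by omega)
  rw [codeLetter_eq_card_filter π hkn, signedRange_succ,
    filter_insert, if_neg (by omega), filter_insert, if_pos le_rfl, card_insert_of_notMem]
  · congr 2
    refine filter_congr fun v hv => ?_
    have hne : pos n π v ≠ pos n π (k + 1 : ℕ) := fun h => by
      have := hπ.1.pos_injOn (signedRange_mono (by omega) hv) hK h
      exact natCast_notMem_signedRange k.lt_succ_self (this ▸ hv)
    omega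
  · exact fun h => natCast_notMem_signedRange k.lt_succ_self (mem_filter.1 h).1

theorem sameOrderOn_signedRange (hπ : IsStdPerm n π) (hρ : IsStdPerm n ρ) {a : List ℕ}
    (hπa : EncodesL n a π) (hρa : EncodesL n a ρ) {k : ℕ} (hkn : k ≤ n) :
    SameOrderOn (pos n π) (pos n ρ) (signedRange k) := by
  induction k with
  | zero => simp [SameOrderOn, signedRange]
  | succ k ih =>
    have hsub := signedRange_mono hkn
    rw [signedRange_succ] at hsub ⊢
    have hsub' := coe_subset.2 ((subset_insert _ _).trans hsub)
    have hK : ((k + 1 : ℕ) : ℤ) ∉ signedRange k := natCast_notMem_signedRange k.lt_succ_self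
    have hnK : -((k + 1 : ℕ) : ℤ) ∉ insert ((k + 1 : ℕ) : ℤ) (signedRange k) := by
      rw [mem_insert, not_or]
      exact ⟨by omega, neg_natCast_notMem_signedRange k.lt_succ_self⟩
    have hlast : ∀ τ : ℕ → ℤ, IsStdPerm n τ →
        ∀ w ∈ insert ((k + 1 : ℕ) : ℤ) (signedRange k),
          pos n τ w < pos n τ (-((k + 1 : ℕ) : ℤ)) := fun τ hτ w hw => by
      refine hτ.pos_lt_pos_neg_of_abs_le (by omega) (by omega) (hsub (mem_insert_of_mem hw)) ?_
        (fun h => hnK (h ▸ hw))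
      have : w ∈ signedRange (k + 1) := by
        rw [signedRange_succ]
        exact mem_insert_of_mem hw
      exact (mem_signedRange.1 this).2
    refine ((ih (by omega)).insert hK (hπ.1.pos_injOn.mono hsub') (hρ.1.pos_injOn.mono hsub')
      ?_).insert hnK (hπ.1.pos_injOn.mono (coe_subset.2 hsub))
      (hρ.1.pos_injOn.mono (coe_subset.2 hsub)) ?_
    · have h1 := hπ.codeLetter_succ hkn
      have h2 := hρ.codeLetter_succ hkn
      rw [← hπ.1.encodesL_iff.1 hπa _ (by omega) hkn] at h1
      rw [← hρ.1.encodesL_iff.1 hρa _ (by omega) hkn] at h2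
      omega
    · rw [card_filter_lt_of_forall_lt (hlast π hπ), card_filter_lt_of_forall_lt (hlast ρ hρ)]

theorem eqOn_of_encodesL (hπ : IsStdPerm n π) (hρ : IsStdPerm n ρ) {a : List ℕ}
    (hπa : EncodesL n a π) (hρa : EncodesL n a ρ) {q : ℕ} (hq : q < 2 * n) : π q = ρ q := by
  have hv := hπ.1.apply_mem hq
  have hord := sameOrderOn_signedRange hπ hρ hπa hρa le_rfl
  have hpos : pos n ρ (π q) = pos n π (π q) := by
    rw [← hπ.1.card_filter_pos_lt hv, ← hρ.1.card_filter_pos_lt hv]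
    exact congrArg card (filter_congr fun u hu => (hord u hu _ hv).symm)
  rw [hπ.1.pos_apply hq] at hpos
  conv_rhs => rw [← hpos, hρ.1.apply_pos hv]

theorem codeLetter_eq_two_mul_sub_one_iff (hπ : IsStdPerm n π) {k : ℕ} (hk : 1 ≤ k)
    (hkn : k ≤ n) :
    codeLetter n π k = 2 * k - 1 ↔
      ∀ v ∈ signedRange k, v ≠ -k → pos n π v ≤ pos n π k := by
  have hnk := neg_natCast_mem_signedRange hk le_rfl
  have hsub : (signedRange k).filter (fun v => pos n π v ≤ pos n π k) ⊆
      (signedRange k).erase (-k) := fun v hv => by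
      rw [mem_filter] at hv
      refine mem_erase.2 ⟨fun hvk => ?_, hv.1⟩
      have := hπ.pos_lt_pos_neg (i := k) (by omega) (by omega)
      rw [hvk] at hv
      omega
  have hcard : #((signedRange k).erase (-k)) = 2 * k - 1 := by
    rw [card_erase_of_mem hnk, card_signedRange]
  rw [codeLetter_eq_card_filter π hkn, ← hcard]
  constructor
  · intro h v hv hvk
    have := (eq_of_subset_of_card_le hsub h.ge).symm ▸ mem_erase.2 ⟨hvk, hv⟩
    exact (mem_filter.1 this).2
  · intro h
    refine le_antisymm (card_le_card hsub) (card_le_card fun v hv => ?_)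
    rw [mem_erase] at hv
    exact mem_filter.2 ⟨hv.2, h v hv.2 hv.1⟩

theorem codeLetter_eq_of_pos_neg_eq_succ (hπ : IsStdPerm n π) {k : ℕ} (hk : 1 ≤ k)
    (hkn : k ≤ n) (h : pos n π (-k) = pos n π k + 1) : codeLetter n π k = 2 * k - 1 := by
  refine (hπ.codeLetter_eq_two_mul_sub_one_iff hk hkn).2 fun v hv hvk => ?_
  have := hπ.pos_lt_pos_neg_of_abs_le (v := v) (k := k) (by omega) (by omega)
    (signedRange_mono hkn hv) (mem_signedRange.1 hv).2 hvk
  omega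

/-- A larger entry `±i` would contradict either the extremality of the letter `i` or the
placement of `-i` after `-k`. -/
theorem abs_apply_pos_succ_le (hπ : IsStdPerm n π) {a : List ℕ} (hπa : EncodesL n a π)
    {k : ℕ} (hk : 1 ≤ k) (hkn : k ≤ n)
    (hext : ∀ j, k < j → j ≤ n → wd a j = 1 ∨ wd a j = 2 * j - 1)
    (hp : pos n π k + 1 < 2 * n) : |π (pos n π k + 1)| ≤ k := by
  set p := pos n π k
  have hxV := hπ.1.apply_mem hp
  have hpx : pos n π (π (p + 1)) = p + 1 := hπ.1.pos_apply hp
  have hkk : p < pos n π (-k) := hπ.pos_lt_pos_neg (by omega) (by omega)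
  by_contra hgt
  obtain ⟨i, hx⟩ : ∃ i : ℕ, π (p + 1) = i ∨ π (p + 1) = -i := ⟨_, Int.natAbs_eq _⟩
  have habs : |π (p + 1)| = i := by rcases hx with hx | hx <;> simp [hx]
  have hi : k < i := by omega
  have hin : i ≤ n := by have := (mem_signedRange.1 hxV).2; omega
  rcases hx with hx | hx <;> rw [hx] at hpx
  · have hki : (k : ℤ) ∈ signedRange i :=
      signedRange_mono hi.le (natCast_mem_signedRange hk le_rfl)
    rcases hext i hi hin with h1 | h2 <;> rw [hπ.1.encodesL_iff.1 hπa i (by omega) hin] at *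
    · have := pos_lt_of_codeLetter_eq_one (by omega) hin h1 hki (by omega)
      omega
    · have := (hπ.codeLetter_eq_two_mul_sub_one_iff (by omega) hin).1 h2 (-k)
        (signedRange_mono hi.le (neg_natCast_mem_signedRange hk le_rfl)) (by omega)
      have := hπ.1.pos_injOn (neg_natCast_mem_signedRange hk hkn)
        (natCast_mem_signedRange (by omega) hin) (by omega)
      omega
  · have := hπ.pos_neg_lt_pos_neg (i := k) (j := i) (by omega) (by omega) (by omega)
    omega

end IsStdPerm

theorem swap_succ_lt {p q N : ℕ} (hp : p + 1 < N) (hq : q < N) : swap p (p + 1) q < N := by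
  rw [swap_apply_def]
  split_ifs <;> omega

theorem swap_succ_le_swap_succ_iff {p q r : ℕ} (h₁ : ¬(q = p ∧ r = p + 1))
    (h₂ : ¬(q = p + 1 ∧ r = p)) : swap p (p + 1) q ≤ swap p (p + 1) r ↔ q ≤ r := by
  simp only [swap_apply_def]
  split_ifs <;> omega

theorem swap_succ_lt_swap_succ_iff {p q r : ℕ} (h₁ : ¬(q = p ∧ r = p + 1))
    (h₂ : ¬(q = p + 1 ∧ r = p)) : swap p (p + 1) q < swap p (p + 1) r ↔ q < r := by
  simp only [swap_apply_def]
  split_ifs <;> omega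

theorem swap_succ_le_succ_iff {p q : ℕ} : swap p (p + 1) q ≤ p + 1 ↔ q ≤ p + 1 := by
  rw [swap_apply_def]
  split_ifs <;> omega

theorem adjSwap_comp_swap {n p : ℕ} {π : ℕ → ℤ} (hp : p + 1 < 2 * n)
    (hne : π p ≠ π (p + 1)) : AdjSwap n π (π ∘ swap p (p + 1)) :=
  ⟨p, hp, by simp, by simp, hne, fun q _ hqp hqp' => by simp [swap_apply_of_ne_of_ne hqp hqp']⟩

theorem AdjSwap.congr {n : ℕ} {π ρ ρ' : ℕ → ℤ} (h : AdjSwap n π ρ)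
    (hρ : ∀ q < 2 * n, ρ q = ρ' q) : AdjSwap n π ρ' := by
  obtain ⟨p, hp, h₁, h₂, hne, hrest⟩ := h
  exact ⟨p, hp, hρ p (by omega) ▸ h₁, hρ (p + 1) hp ▸ h₂, hne,
    fun q hq hqp hqp' => hρ q hq ▸ hrest q hq hqp hqp'⟩

theorem AdjSwap.symm {n : ℕ} {π ρ : ℕ → ℤ} (h : AdjSwap n π ρ) : AdjSwap n ρ π := by
  obtain ⟨p, hp, h₁, h₂, hne, hrest⟩ := h
  exact ⟨p, hp, h₂.symm, h₁.symm, by rwa [h₁, h₂, ne_comm],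
    fun q hq hqp hqp' => (hrest q hq hqp hqp').symm⟩

namespace IsSgnPerm

variable {n p : ℕ} {π : ℕ → ℤ}

theorem comp_swap (hπ : IsSgnPerm n π) (hp : p + 1 < 2 * n) :
    IsSgnPerm n (π ∘ swap p (p + 1)) := by
  have himage : (range (2 * n)).image (swap p (p + 1)) = range (2 * n) :=
    eq_of_subset_of_card_le
      (image_subset_iff.2 fun q hq => mem_range.2 (swap_succ_lt hp (mem_range.1 hq)))
      (card_image_of_injective _ (swap p (p + 1)).injective).ge
  rw [IsSgnPerm, ← image_image, himage]
  exact hπ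

theorem pos_comp_swap (hπ : IsSgnPerm n π) (hp : p + 1 < 2 * n) {v : ℤ}
    (hv : v ∈ signedRange n) : pos n (π ∘ swap p (p + 1)) v = swap p (p + 1) (pos n π v) := by
  have hlt := swap_succ_lt hp (hπ.pos_lt hv)
  conv_lhs => rw [← hπ.apply_pos hv, ← swap_apply_self p (p + 1) (pos n π v)]
  exact (hπ.comp_swap hp).pos_apply hlt

theorem codeLetter_comp_swap_self (hπ : IsSgnPerm n π) (hp : p + 1 < 2 * n)
    (hx : |π (p + 1)| < π p) :
    codeLetter n (π ∘ swap p (p + 1)) (π p) = codeLetter n π (π p) + 1 := by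
  have hkV := hπ.apply_mem (q := p) (by omega)
  have hxV := hπ.apply_mem hp
  have hpk : pos n π (π p) = p := hπ.pos_apply (by omega)
  have hpx : pos n π (π (p + 1)) = p + 1 := hπ.pos_apply hp
  have hfilter : (signedRange n).filter (fun v => |v| ≤ π p ∧
        pos n (π ∘ swap p (p + 1)) v ≤ pos n (π ∘ swap p (p + 1)) (π p)) =
      insert (π (p + 1))
        ((signedRange n).filter (fun v => |v| ≤ π p ∧ pos n π v ≤ p)) := by
    ext v
    simp only [mem_insert, mem_filter]
    constructor
    · rintro ⟨hv, hvk, hle⟩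
      rw [hπ.pos_comp_swap hp hv, hπ.pos_comp_swap hp hkV, hpk, swap_apply_left,
        swap_succ_le_succ_iff] at hle
      rcases hle.lt_or_eq with hlt | heq
      · exact Or.inr ⟨hv, hvk, by omega⟩
      · exact Or.inl (hπ.eq_of_pos_eq hv heq).symm
    · rintro (rfl | ⟨hv, hvk, hle⟩)
      · refine ⟨hxV, hx.le, ?_⟩
        rw [hπ.pos_comp_swap hp hxV, hπ.pos_comp_swap hp hkV, hpk, hpx, swap_apply_left,
          swap_apply_right]
        omega
      · refine ⟨hv, hvk, ?_⟩
        rw [hπ.pos_comp_swap hp hv, hπ.pos_comp_swap hp hkV, hpk, swap_apply_left,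
          swap_succ_le_succ_iff]
        omega
  rw [codeLetter, codeLetter, hfilter, hpk, card_insert_of_notMem]
  simp [hpx]

theorem codeLetter_comp_swap_of_ne (hπ : IsSgnPerm n π) (hp : p + 1 < 2 * n)
    (hx : |π (p + 1)| < π p) {j : ℤ} (hj : j ∈ signedRange n) (hjk : j ≠ π p) :
    codeLetter n (π ∘ swap p (p + 1)) j = codeLetter n π j := by
  unfold codeLetter
  congr 1
  refine filter_congr fun v hv => ?_
  rw [hπ.pos_comp_swap hp hv, hπ.pos_comp_swap hp hj]
  by_cases hvj : v = π p ∧ j = π (p + 1)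
  · have : ¬|v| ≤ j := by
      have := le_abs_self (π p)
      have := le_abs_self (π (p + 1))
      rw [hvj.1, hvj.2]
      omega
    exact iff_of_false (fun h => this h.1) (fun h => this h.1)
  · rw [swap_succ_le_swap_succ_iff]
    · exact fun ⟨h₁, h₂⟩ =>
        hvj ⟨(hπ.eq_of_pos_eq hv h₁).symm, (hπ.eq_of_pos_eq hj h₂).symm⟩
    · exact fun ⟨_, h₂⟩ => hjk (hπ.eq_of_pos_eq hj h₂).symm

end IsSgnPerm

theorem IsStdPerm.comp_swap {n p : ℕ} {π : ℕ → ℤ} (hπ : IsStdPerm n π)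
    (hp : p + 1 < 2 * n) (hpos : 0 < π p) (hne : π (p + 1) ≠ -π p) :
    IsStdPerm n (π ∘ swap p (p + 1)) := by
  refine ⟨hπ.1.comp_swap hp, fun q r hq hr hqpos hqr => ?_, fun q r hq hr hqneg hrneg => ?_⟩
  · simp only [Function.comp_apply] at hqpos hqr
    have hlt := hπ.2.1 _ _ (swap_succ_lt hp hq) (swap_succ_lt hp hr) hqpos hqr
    have h₁ : ¬(swap p (p + 1) q = p ∧ swap p (p + 1) r = p + 1) := fun ⟨h₁, h₂⟩ => by
      rw [h₁, h₂] at hqr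
      exact hne hqr
    have h₂ : ¬(swap p (p + 1) q = p + 1 ∧ swap p (p + 1) r = p) := fun ⟨h₁, h₂⟩ => by
      omega
    simpa using (swap_succ_lt_swap_succ_iff h₁ h₂).2 hlt
  · simp only [Function.comp_apply] at hqneg hrneg ⊢
    have h₁ : ¬(q = p ∧ r = p + 1) := fun ⟨_, h⟩ => by
      rw [h, swap_apply_right] at hrneg
      omega
    have h₂ : ¬(q = p + 1 ∧ r = p) := fun ⟨h, _⟩ => by
      rw [h, swap_apply_right] at hqneg
      omega
    rw [← swap_succ_lt_swap_succ_iff h₁ h₂]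
    exact hπ.2.2 _ _ (swap_succ_lt hp hq) (swap_succ_lt hp hr) hqneg hrneg

namespace IncrStep

variable {n k : ℕ} {a b : List ℕ} {π : ℕ → ℤ}

theorem encodesL_comp_swap (h : IncrStep n k a b) (hπ : IsSgnPerm n π) (hπa : EncodesL n a π)
    {p : ℕ} (hp : p + 1 < 2 * n) (hpk : π p = k) (hx : |π (p + 1)| < k) :
    EncodesL n b (π ∘ swap p (p + 1)) := by
  rw [← hpk] at hx
  refine (hπ.comp_swap hp).encodesL_iff.2 fun j hj hjn => ?_
  by_cases hjk : j = k
  · subst hjk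
    rw [← hpk, hπ.codeLetter_comp_swap_self hp hx, hpk, ← hπ.encodesL_iff.1 hπa _ hj hjn,
      h.wd_succ]
  · rw [hπ.codeLetter_comp_swap_of_ne hp hx (natCast_mem_signedRange hj hjn)
      (by rw [hpk]; exact_mod_cast hjk), ← hπ.encodesL_iff.1 hπa j hj hjn, h.wd_eq j hj hjn hjk]

theorem adjSwap {ρ : ℕ → ℤ} (h : IncrStep n k a b) (hπ : IsStdPerm n π)
    (hπa : EncodesL n a π) (hρ : IsStdPerm n ρ) (hρb : EncodesL n b ρ) :
    AdjSwap n π ρ := by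
  have hk := h.one_le
  have hkn := h.le_len
  have hkV := natCast_mem_signedRange hk hkn
  have hp : pos n π k + 1 < 2 * n := by
    have := hπ.pos_lt_pos_neg (i := k) (by omega) (by omega)
    have := hπ.1.pos_lt (neg_natCast_mem_signedRange hk hkn)
    omega
  set p := pos n π k
  have hpk : π p = k := hπ.1.apply_pos hkV
  have hpx : pos n π (π (p + 1)) = p + 1 := hπ.1.pos_apply hp
  have hne_neg : π (p + 1) ≠ -k := fun hx => by
    have := hπ.codeLetter_eq_of_pos_neg_eq_succ hk hkn (by rw [← hx, hpx])
    have := h.wd_le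
    rw [h.wd_succ, hπ.1.encodesL_iff.1 hπa k hk hkn] at this
    omega
  have hne_k : π (p + 1) ≠ k := fun hx => by
    rw [hx] at hpx
    omega
  have hx : |π (p + 1)| < k := by
    have : |π (p + 1)| ≤ k := hπ.abs_apply_pos_succ_le hπa hk hkn h.extreme hp
    rcases abs_cases (π (p + 1)) with ⟨habs, _⟩ | ⟨habs, _⟩ <;> omega
  have hswap := hπ.comp_swap hp (by omega) (by rw [hpk]; exact hne_neg)
  have hswapb := h.encodesL_comp_swap hπ.1 hπa hp hpk hx
  exact (adjSwap_comp_swap hp (by omega)).congr fun q hq =>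
    hswap.eqOn_of_encodesL hρ hswapb hρb hq

end IncrStep

/-- Consecutive words in the full Gray code encode standard
permutations differing by an adjacent transposition. -/
theorem stmt_16 (n m : ℕ) (a b : List ℕ)
    (ha : (grayCode n)[m]? = some a) (hb : (grayCode n)[m+1]? = some b)
    (πa πb : ℕ → ℤ) (hπa : IsStdPerm n πa) (hπb : IsStdPerm n πb)
    (hea : EncodesL n a πa) (heb : EncodesL n b πb) :
    AdjSwap n πa πb := by
  obtain ⟨k, hab | hba⟩ := exists_incrStep_of_grayCode ha hb
  · exact hab.adjSwap hπa hea hπb heb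
  · exact (hba.adjSwap hπb heb hπa hea).symm
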